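/- For n ≥ 1 and nonnegative integers w_1, …, w_n, with w = w_1 + ⋯ + w_n, the following identity holds in ℚ(q): ∏_{l=1}^{n} [ (q^{−Σ_{i=l}^{n} w_i})_{w_l} / ( (q)_{Σ_{i=l}^{n} w_i} · (q^{−Σ_{i=1}^{l−1} w_i})_{Σ_{i=1}^{l−1} w_i} ) ] · ∏_{1 ≤ i < j ≤ n} (q^{−Σ_{l=i}^{j−1} w_l})_{w_i} (q^{Σ_{l=i}^{j−1} w_l + 1})_{w_j} = (−1)^{w} q^{−(w+1 choose 2)} (q)_w / ((q)_{w_1} ⋯ (q)_{w_n}). -/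

import Mathlib

/-!
Write `Q m = (q^{-m})_m`, the `q`-factorial in base `q⁻¹`; the right-hand side is
`Q w / ∏ (q)_{w_l}`. Everything comes from the splitting rule `(z)_{a+b} = (z)_a (z q^a)_b`.
Induct on `n`. Appending `u = w_{n+1}` multiplies the `l`-th diagonal factor and the new pair
factor `(l, n+1)` together into the old diagonal factor times `(q^{-(w_l + ⋯ + w_{n+1})})_{w_l}`,
since `(q)_{m+u} = (q)_m (q^{m+1})_u`. These new `q`-shifted factorials, together with the one in
the new diagonal factor, telescope to `Q (w + u)` by the splitting rule, so the left-hand side is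
multiplied by `Q (w + u) / ((q)_u Q w)`, as is the right-hand side.
-/

open Finset

noncomputable section

abbrev K : Type := RatFunc ℚ

def q : K := RatFunc.X

/-- the q-shifted factorial `(z)_k = ∏_{i=0}^{k-1} (1 - z qⁱ)` in `ℚ(q)`. -/
def pochK (z : K) (k : ℕ) : K := ∏ t ∈ range k, (1 - z * q ^ t)

/-- `(q)_k`. -/
def qfac (k : ℕ) : K := ∏ t ∈ range k, (1 - q ^ (t + 1))

lemma pochK_add (z : K) (a b : ℕ) : pochK z (a + b) = pochK z a * pochK (z * q ^ a) b := by
  simp only [pochK, prod_range_add, pow_add, mul_assoc]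

lemma pochK_one (z : K) : pochK z 1 = 1 - z := by
  simp [pochK]

lemma qfac_eq_pochK (k : ℕ) : qfac k = pochK q k := by
  simp only [qfac, pochK, pow_succ']

lemma qfac_add (m k : ℕ) : qfac (m + k) = qfac m * pochK (q ^ (m + 1)) k := by
  rw [qfac_eq_pochK, qfac_eq_pochK, pochK_add, pow_succ']

lemma q_ne_zero : q ≠ 0 := RatFunc.X_ne_zero

open Polynomial in
lemma one_sub_q_pow_ne_zero {k : ℕ} (hk : k ≠ 0) : 1 - q ^ k ≠ 0 := by
  have h : (1 : K) - q ^ k = algebraMap ℚ[X] K (-(X ^ k - C 1)) := by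
    simp [q, RatFunc.algebraMap_X]
  rw [h, map_ne_zero_iff _ (RatFunc.algebraMap_injective ℚ), neg_ne_zero]
  exact X_pow_sub_C_ne_zero (Nat.pos_of_ne_zero hk) 1

lemma qfac_ne_zero (k : ℕ) : qfac k ≠ 0 :=
  prod_ne_zero_iff.mpr fun _ _ ↦ one_sub_q_pow_ne_zero (Nat.succ_ne_zero _)

/-- `(q^{-m})_m = (q⁻¹; q⁻¹)_m`, the q-factorial in base `q⁻¹`. -/
def qfacInv (m : ℕ) : K := pochK (q ^ (-(m : ℤ))) m

lemma qfacInv_add (a b : ℕ) :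
    qfacInv (a + b) = pochK (q ^ (-((a + b : ℕ) : ℤ))) a * qfacInv b := by
  rw [qfacInv, pochK_add, qfacInv, ← zpow_natCast q a, ← zpow_add₀ q_ne_zero]
  congr 3
  push_cast
  ring

lemma qfacInv_eq (m : ℕ) :
    qfacInv m = (-1) ^ m * q ^ (-((m + 1).choose 2 : ℤ)) * qfac m := by
  induction m with
  | zero => simp [qfacInv, pochK, qfac]
  | succ m ih =>
    have hq : q ^ (-((m + 1 : ℕ) : ℤ)) * q ^ (m + 1) = 1 := by
      rw [← zpow_natCast, ← zpow_add₀ q_ne_zero, neg_add_cancel, zpow_zero]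
    rw [add_comm m 1, qfacInv_add, ih, add_comm 1 m, qfac_add m 1, pochK_one, pochK_one,
      Nat.choose_succ_succ' (m + 1), Nat.choose_one_right]
    have hexp : q ^ (-((m + 1 + (m + 1).choose (1 + 1) : ℕ) : ℤ)) =
        q ^ (-((m + 1 : ℕ) : ℤ)) * q ^ (-((m + 1).choose 2 : ℤ)) := by
      rw [← zpow_add₀ q_ne_zero, Nat.cast_add, neg_add]
    rw [hexp, pow_succ]
    linear_combination -((-1) ^ m * q ^ (-((m + 1).choose 2 : ℤ)) * qfac m) * hq

lemma qfacInv_ne_zero (m : ℕ) : qfacInv m ≠ 0 := by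
  rw [qfacInv_eq]
  exact mul_ne_zero (mul_ne_zero (pow_ne_zero _ (neg_ne_zero.mpr one_ne_zero))
    (zpow_ne_zero _ q_ne_zero)) (qfac_ne_zero m)

lemma prod_pochK_suffix (w : ℕ → ℕ) {a N : ℕ} (h : a ≤ N + 1) :
    ∏ l ∈ Icc a N, pochK (q ^ (-((∑ t ∈ Icc l N, w t : ℕ) : ℤ))) (w l) =
      qfacInv (∑ t ∈ Icc a N, w t) := by
  induction h using Nat.decreasingInduction with
  | self => simp [qfacInv, pochK]
  | of_succ a ha ih =>
    rw [← mul_prod_Ioc_eq_prod_Icc (by omega), ← add_sum_Ioc_eq_sum_Icc (by omega),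
      ← Icc_add_one_left_eq_Ioc, ih, qfacInv_add]

lemma prod_filter_lt_product_Icc {M : Type*} [CommMonoid M] (f : ℕ → ℕ → M) (n : ℕ) :
    ∏ ij ∈ ((Icc 1 n) ×ˢ (Icc 1 n)).filter (fun ij => ij.1 < ij.2), f ij.1 ij.2 =
      ∏ j ∈ Icc 1 n, ∏ i ∈ Ico 1 j, f i j :=
  prod_finset_product_right' _ _ _ fun ij ↦ by
    simp only [mem_filter, mem_product, mem_Icc, mem_Ico]
    omega

-- The `l`-th factor of the first product and the `(i, j)`-th factor of the second.
def diagFactor (w : ℕ → ℕ) (n l : ℕ) : K :=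
  pochK (q ^ (-((∑ t ∈ Icc l n, w t : ℕ) : ℤ))) (w l) /
    (qfac (∑ t ∈ Icc l n, w t) * qfacInv (∑ t ∈ Icc 1 (l - 1), w t))

def pairFactor (w : ℕ → ℕ) (i j : ℕ) : K :=
  pochK (q ^ (-((∑ t ∈ Icc i (j - 1), w t : ℕ) : ℤ))) (w i) *
    pochK (q ^ ((∑ t ∈ Icc i (j - 1), w t) + 1)) (w j)

lemma diagFactor_succ_mul_pairFactor (w : ℕ → ℕ) {n l : ℕ} (hl : l ≤ n + 1) :
    diagFactor w (n + 1) l * pairFactor w l (n + 1) =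
      diagFactor w n l * pochK (q ^ (-((∑ t ∈ Icc l (n + 1), w t : ℕ) : ℤ))) (w l) := by
  have hqfac := qfac_add (∑ t ∈ Icc l n, w t) (w (n + 1))
  have hpochK : pochK (q ^ ((∑ t ∈ Icc l n, w t) + 1)) (w (n + 1)) ≠ 0 :=
    right_ne_zero_of_mul (hqfac ▸ qfac_ne_zero _)
  have := qfac_ne_zero (∑ t ∈ Icc l n, w t)
  have := qfacInv_ne_zero (∑ t ∈ Icc 1 (l - 1), w t)
  simp only [diagFactor, pairFactor, Nat.add_sub_cancel, sum_Icc_succ_top hl, hqfac]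
  field_simp

lemma prod_diagFactor_mul_prod_pairFactor (w : ℕ → ℕ) (n : ℕ) :
    (∏ l ∈ Icc 1 n, diagFactor w n l) * ∏ j ∈ Icc 1 n, ∏ i ∈ Ico 1 j, pairFactor w i j =
      qfacInv (∑ t ∈ Icc 1 n, w t) / ∏ t ∈ Icc 1 n, qfac (w t) := by
  induction n with
  | zero => simp [qfacInv, pochK]
  | succ n ih =>
    set suffixPochK := fun l ↦ pochK (q ^ (-((∑ t ∈ Icc l (n + 1), w t : ℕ) : ℤ))) (w l)
    have hstep : ∏ l ∈ Icc 1 n, diagFactor w (n + 1) l * pairFactor w l (n + 1) =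
        (∏ l ∈ Icc 1 n, diagFactor w n l) * ∏ l ∈ Icc 1 n, suffixPochK l := by
      rw [← prod_mul_distrib]
      exact prod_congr rfl fun l hl ↦
        diagFactor_succ_mul_pairFactor w (Nat.le_succ_of_le (mem_Icc.mp hl).2)
    have hlast : diagFactor w (n + 1) (n + 1) =
        suffixPochK (n + 1) / (qfac (w (n + 1)) * qfacInv (∑ t ∈ Icc 1 n, w t)) := by
      simp [diagFactor, suffixPochK]
    have htelescope :
        ∏ l ∈ Icc 1 (n + 1), suffixPochK l = qfacInv (∑ t ∈ Icc 1 (n + 1), w t) :=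
      prod_pochK_suffix w (by omega)
    have := qfacInv_ne_zero (∑ t ∈ Icc 1 n, w t)
    have := qfac_ne_zero (w (n + 1))
    calc _ = (∏ l ∈ Icc 1 n, diagFactor w (n + 1) l * pairFactor w l (n + 1)) *
          (∏ j ∈ Icc 1 n, ∏ i ∈ Ico 1 j, pairFactor w i j) *
            diagFactor w (n + 1) (n + 1) := by
          rw [prod_Icc_succ_top (by omega), prod_Icc_succ_top (by omega),
            Ico_add_one_right_eq_Icc, prod_mul_distrib]
          ring
      _ = qfacInv (∑ t ∈ Icc 1 n, w t) / (∏ t ∈ Icc 1 n, qfac (w t)) *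
          (∏ l ∈ Icc 1 (n + 1), suffixPochK l) /
            (qfac (w (n + 1)) * qfacInv (∑ t ∈ Icc 1 n, w t)) := by
          rw [hstep, hlast, prod_Icc_succ_top (a := 1) (by omega) suffixPochK, ← ih]
          ring
      _ = _ := by
          rw [htelescope, prod_Icc_succ_top (by omega)]
          field_simp

theorem qfactorial_product_identity_general (n : ℕ) (w : ℕ → ℕ) :
    (∏ l ∈ Icc 1 n,
        pochK (q ^ (-(∑ t ∈ Icc l n, w t : ℤ))) (w l) /
          (qfac (∑ t ∈ Icc l n, w t) *
            pochK (q ^ (-(∑ t ∈ Icc 1 (l-1), w t : ℤ))) (∑ t ∈ Icc 1 (l-1), w t))) *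
      ∏ ij ∈ ((Icc 1 n) ×ˢ (Icc 1 n)).filter (fun ij => ij.1 < ij.2),
        pochK (q ^ (-(∑ t ∈ Icc ij.1 (ij.2 - 1), w t : ℤ))) (w ij.1) *
          pochK (q ^ ((∑ t ∈ Icc ij.1 (ij.2 - 1), w t) + 1)) (w ij.2) =
      (-1 : K) ^ (∑ t ∈ Icc 1 n, w t) *
        q ^ (-(Nat.choose ((∑ t ∈ Icc 1 n, w t) + 1) 2 : ℤ)) *
        qfac (∑ t ∈ Icc 1 n, w t) / ∏ t ∈ Icc 1 n, qfac (w t) := by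
  simp only [← Nat.cast_sum]
  change (∏ l ∈ Icc 1 n, diagFactor w n l) *
      ∏ ij ∈ ((Icc 1 n) ×ˢ (Icc 1 n)).filter (fun ij => ij.1 < ij.2),
        pairFactor w ij.1 ij.2 = _
  rw [prod_filter_lt_product_Icc, ← qfacInv_eq]
  exact prod_diagFactor_mul_prod_pairFactor w n

/-- For `n ≥ 1` and nonnegative integers `w₁, …, wₙ` with `w = w₁ + ⋯ + wₙ`:
`∏_{l=1}^n [(q^{-∑_{i=l}^n wᵢ})_{w_l} / ((q)_{∑_{i=l}^n wᵢ} (q^{-∑_{i=1}^{l-1} wᵢ})_{∑_{i=1}^{l-1} wᵢ})]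
 · ∏_{1≤i<j≤n} (q^{-∑_{l=i}^{j-1} w_l})_{wᵢ} (q^{∑_{l=i}^{j-1} w_l + 1})_{wⱼ}
 = (-1)^w q^{-C(w+1,2)} (q)_w / ((q)_{w₁}⋯(q)_{wₙ})`. -/
theorem qfactorial_product_identity (n : ℕ) (hn : 1 ≤ n) (w : ℕ → ℕ) :
    (∏ l ∈ Icc 1 n,
        pochK (q ^ (-(∑ t ∈ Icc l n, w t : ℤ))) (w l) /
          (qfac (∑ t ∈ Icc l n, w t) *
            pochK (q ^ (-(∑ t ∈ Icc 1 (l-1), w t : ℤ))) (∑ t ∈ Icc 1 (l-1), w t))) *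
      ∏ ij ∈ ((Icc 1 n) ×ˢ (Icc 1 n)).filter (fun ij => ij.1 < ij.2),
        pochK (q ^ (-(∑ t ∈ Icc ij.1 (ij.2 - 1), w t : ℤ))) (w ij.1) *
          pochK (q ^ ((∑ t ∈ Icc ij.1 (ij.2 - 1), w t) + 1)) (w ij.2) =
      (-1 : K) ^ (∑ t ∈ Icc 1 n, w t) *
        q ^ (-(Nat.choose ((∑ t ∈ Icc 1 n, w t) + 1) 2 : ℤ)) *
        qfac (∑ t ∈ Icc 1 n, w t) / ∏ t ∈ Icc 1 n, qfac (w t) :=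
  qfactorial_product_identity_general n w

end
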